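/- (Result 3) Let P_1,…,P_N be mutually independent p-values with P_i ~ Uniform(0,1) for each i ∈ I^0. Let ŵ_i : [0,1]^N → (0,∞), i = 1,…,N, be measurable weight functions, each coordinatewise nondecreasing. If E[ Σ_{i ∈ I^0} 1/ŵ_i((P^{(−i)},0)) ] ≤ N, where (P^{(−i)},0) denotes the p-value vector P with its i-th coordinate replaced by 0, then the data-adaptive weighted BH procedure at level α — the level-α BH procedure applied to the weighted p-values ŵ_i(P)·P_i — has FDR ≤ α. -/

import Mathlib

open MeasureTheory ProbabilityTheory Finset

/-- Number of rejections of the (weighted) BH step-up procedure at level `α`,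
applied to the (weighted) p-values `Q`: the largest `j ≤ N` such that at least `j`
of the values `Q i` are `≤ j*α/N` (this is `0`, i.e. no rejections, when no such
`j ≥ 1` exists). -/
noncomputable def bhNumRejections (N : ℕ) (α : ℝ) (Q : Fin N → ℝ) : ℕ :=
  ((Finset.range (N + 1)).filter
      (fun j : ℕ => j ≤ (Finset.univ.filter (fun i : Fin N => Q i ≤ (j : ℝ) * α / N)).card)).sup id

/-- The set of indices rejected by the level-`α` BH procedure applied to `Q`. -/
noncomputable def bhRejected (N : ℕ) (α : ℝ) (Q : Fin N → ℝ) : Finset (Fin N) :=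
  Finset.univ.filter (fun i => Q i ≤ (bhNumRejections N α Q : ℝ) * α / N)

/-- False discovery proportion `V / max(R,1)` of the level-`α` BH procedure. -/
noncomputable def FDP (N : ℕ) (α : ℝ) (I0 : Finset (Fin N)) (Q : Fin N → ℝ) : ℝ :=
  ((bhRejected N α Q ∩ I0).card : ℝ) / max ((bhRejected N α Q).card : ℝ) 1

/-- False discovery rate `E[V / max(R,1)]` of the level-`α` BH procedure applied to
the (random, possibly weighted) p-values `Q ω`. -/
noncomputable def FDR {Ω : Type*} [MeasurableSpace Ω] (μ : Measure Ω)
    (N : ℕ) (α : ℝ) (I0 : Finset (Fin N)) (Q : Ω → Fin N → ℝ) : ℝ :=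
  ∫ ω, FDP N α I0 (Q ω) ∂μ

/-- Assumption 1: each null p-value is Uniform(0,1) (stated via its cdf). -/
def UniformNulls {Ω : Type*} [MeasurableSpace Ω] (μ : Measure Ω)
    {N : ℕ} (P : Ω → Fin N → ℝ) (I0 : Finset (Fin N)) : Prop :=
  ∀ i ∈ I0, ∀ x ∈ Set.Icc (0 : ℝ) 1, μ {ω | P ω i ≤ x} = ENNReal.ofReal x

/-- Assumption 2: the p-values are PRDS on the subset of null p-values. -/
def PRDSNulls {Ω : Type*} [MeasurableSpace Ω] (μ : Measure Ω)
    {N : ℕ} (P : Ω → Fin N → ℝ) (I0 : Finset (Fin N)) : Prop :=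
  ∀ i ∈ I0, ∀ φ : (Fin N → ℝ) → ℝ, Measurable φ → (∃ C, ∀ p, |φ p| ≤ C) →
    (∀ p q : Fin N → ℝ, (∀ j, p j ≤ q j) → φ p ≤ φ q) →
    ∀ x y : ℝ, 0 < x → x ≤ y → y ≤ 1 →
      (∫ ω in {ω | P ω i ≤ x}, φ (P ω) ∂μ) / (μ {ω | P ω i ≤ x}).toReal ≤
        (∫ ω in {ω | P ω i ≤ y}, φ (P ω) ∂μ) / (μ {ω | P ω i ≤ y}).toReal

section AuxiliaryLemmas

lemma bh_le_card {N : ℕ} {α : ℝ} (Q : Fin N → ℝ) :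
    bhNumRejections N α Q ≤ (bhRejected N α Q).card := by
  have h0 : (0:ℕ) ∈ (Finset.range (N + 1)).filter
      (fun j : ℕ => j ≤ (Finset.univ.filter (fun i : Fin N => Q i ≤ (j : ℝ) * α / N)).card) := by
    simp
  obtain ⟨b, hb, hbe⟩ := Finset.exists_mem_eq_sup _ ⟨0, h0⟩ (id : ℕ → ℕ)
  have hR : bhNumRejections N α Q = b := hbe
  rw [bhRejected, hR]
  exact (Finset.mem_filter.mp hb).2

lemma card_bhRejected {N : ℕ} {α : ℝ} (hN : 0 < N) (hα : 0 ≤ α) (Q : Fin N → ℝ) :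
    (bhRejected N α Q).card = bhNumRejections N α Q := by
  refine le_antisymm ?_ (bh_le_card Q)
  set R := bhNumRejections N α Q with hR
  have hRm : R ≤ (bhRejected N α Q).card := bh_le_card Q
  have hmN : (bhRejected N α Q).card ≤ N := by
    calc (bhRejected N α Q).card ≤ (Finset.univ : Finset (Fin N)).card :=
          Finset.card_le_card (Finset.filter_subset _ _)
      _ = N := by simp
  have hmono : (R : ℝ) * α / N ≤ ((bhRejected N α Q).card : ℝ) * α / N := by
    have h1 : (R : ℝ) ≤ ((bhRejected N α Q).card : ℝ) := by exact_mod_cast hRm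
    gcongr
  have hmm : (bhRejected N α Q).card ≤
      (Finset.univ.filter (fun i : Fin N =>
        Q i ≤ ((bhRejected N α Q).card : ℝ) * α / N)).card := by
    apply Finset.card_le_card
    intro i hi
    rw [bhRejected, Finset.mem_filter] at hi
    rw [Finset.mem_filter]
    exact ⟨hi.1, le_trans hi.2 hmono⟩
  have hmem : (bhRejected N α Q).card ∈ (Finset.range (N + 1)).filter
      (fun j : ℕ => j ≤ (Finset.univ.filter (fun i : Fin N => Q i ≤ (j : ℝ) * α / N)).card) := by
    rw [Finset.mem_filter, Finset.mem_range]
    exact ⟨Nat.lt_succ_of_le hmN, hmm⟩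
  exact Finset.le_sup (f := id) hmem

lemma bh_antitone {N : ℕ} {α : ℝ} {Q Q' : Fin N → ℝ} (h : ∀ i, Q i ≤ Q' i) :
    bhNumRejections N α Q' ≤ bhNumRejections N α Q := by
  apply Finset.sup_mono
  intro j hj
  rw [Finset.mem_filter] at hj ⊢
  refine ⟨hj.1, le_trans hj.2 (Finset.card_le_card ?_)⟩
  intro i hi
  rw [Finset.mem_filter] at hi ⊢
  exact ⟨hi.1, le_trans (h i) hi.2⟩

lemma bh_measurable (N : ℕ) (α : ℝ) : Measurable (bhNumRejections N α) := by
  have hc : ∀ j : ℕ, Measurable (fun Q : Fin N → ℝ =>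
      (Finset.univ.filter (fun i : Fin N => Q i ≤ (j : ℝ) * α / N)).card) := by
    intro j
    have heq : (fun Q : Fin N → ℝ =>
        (Finset.univ.filter (fun i : Fin N => Q i ≤ (j : ℝ) * α / N)).card)
        = fun Q => ∑ i : Fin N, if Q i ≤ (j : ℝ) * α / N then 1 else 0 := by
      funext Q; rw [Finset.card_filter]
    rw [heq]
    refine Finset.measurable_sum _ fun i _ => Measurable.ite ?_ measurable_const measurable_const
    exact measurableSet_le (measurable_pi_apply i) measurable_const
  let b : (Fin N → ℝ) → (Fin (N + 1) → Bool) := fun Q j =>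
    decide ((j : ℕ) ≤ (Finset.univ.filter
      (fun i : Fin N => Q i ≤ ((j : ℕ) : ℝ) * α / N)).card)
  have hb : Measurable b := by
    refine measurable_pi_lambda _ fun j => ?_
    have heq : (fun Q : Fin N → ℝ => b Q j) = fun Q =>
        if (j : ℕ) ≤ (Finset.univ.filter
          (fun i : Fin N => Q i ≤ ((j : ℕ) : ℝ) * α / N)).card then true else false := by
      funext Q
      by_cases h : (j : ℕ) ≤ (Finset.univ.filter
          (fun i : Fin N => Q i ≤ ((j : ℕ) : ℝ) * α / N)).card
      · simp [b, h]
      · simp [b, h]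
    rw [heq]
    refine Measurable.ite ?_ measurable_const measurable_const
    exact hc (j : ℕ) MeasurableSet.of_discrete
  let g : (Fin (N + 1) → Bool) → ℕ := fun bv =>
    (Finset.univ.filter (fun j : Fin (N + 1) => bv j = true)).sup (fun j => (j : ℕ))
  have hg : Measurable g := measurable_of_finite g
  have hbh : bhNumRejections N α = g ∘ b := by
    funext Q
    simp only [Function.comp_apply, bhNumRejections, g, b]
    apply le_antisymm
    · refine Finset.sup_le fun j hj => ?_
      rw [Finset.mem_filter, Finset.mem_range] at hj
      refine Finset.le_sup (f := fun j : Fin (N + 1) => (j : ℕ)) (b := ⟨j, hj.1⟩) ?_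
      simp only [Finset.mem_filter, Finset.mem_univ, true_and, decide_eq_true_eq]
      exact hj.2
    · refine Finset.sup_le fun j hj => ?_
      rw [Finset.mem_filter] at hj
      have hj2 : (j : ℕ) ≤ (Finset.univ.filter
          (fun i : Fin N => Q i ≤ ((j : ℕ) : ℝ) * α / N)).card := by
        simpa [decide_eq_true_eq] using hj.2
      refine Finset.le_sup (f := (id : ℕ → ℕ)) ?_
      rw [Finset.mem_filter, Finset.mem_range]
      exact ⟨j.isLt, hj2⟩
  rw [hbh]; exact hg.comp hb

/-- The contribution of hypothesis `i` to the false discovery proportion of the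
weighted BH procedure with weights `wh`, as a function of the p-value vector `p`. -/
noncomputable def hfun (N : ℕ) (α : ℝ) (wh : Fin N → (Fin N → ℝ) → ℝ) (i : Fin N)
    (p : Fin N → ℝ) : ℝ :=
  (if wh i p * p i ≤ (bhNumRejections N α (fun j => wh j p * p j) : ℝ) * α / N then 1 else 0) /
    max (bhNumRejections N α (fun j => wh j p * p j) : ℝ) 1

lemma hfun_nonneg (N : ℕ) (α : ℝ) (wh : Fin N → (Fin N → ℝ) → ℝ) (i : Fin N) (p : Fin N → ℝ) :
    0 ≤ hfun N α wh i p := by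
  unfold hfun
  apply div_nonneg
  · split <;> norm_num
  · exact le_trans zero_le_one (le_max_right _ 1)

lemma hfun_le_one (N : ℕ) (α : ℝ) (wh : Fin N → (Fin N → ℝ) → ℝ) (i : Fin N) (p : Fin N → ℝ) :
    hfun N α wh i p ≤ 1 := by
  unfold hfun
  apply div_le_one_of_le₀
  · split
    · exact le_max_right _ 1
    · exact le_trans zero_le_one (le_max_right _ 1)
  · exact le_trans zero_le_one (le_max_right _ 1)

lemma hfun_measurable (N : ℕ) (α : ℝ) (wh : Fin N → (Fin N → ℝ) → ℝ)
    (hwh : ∀ i, Measurable (wh i)) (i : Fin N) : Measurable (hfun N α wh i) := by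
  have hQ : Measurable (fun p : Fin N → ℝ => (fun j => wh j p * p j : Fin N → ℝ)) :=
    measurable_pi_lambda _ fun j => ((hwh j).mul (measurable_pi_apply j))
  have hR : Measurable (fun p : Fin N → ℝ =>
      (bhNumRejections N α (fun j => wh j p * p j) : ℝ)) :=
    (measurable_of_countable (fun n : ℕ => (n : ℝ))).comp ((bh_measurable N α).comp hQ)
  unfold hfun
  refine Measurable.div ?_ (hR.max measurable_const)
  refine Measurable.ite ?_ measurable_const measurable_const
  exact measurableSet_le ((hwh i).mul (measurable_pi_apply i))
    ((hR.mul measurable_const).div_const _)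

lemma FDP_eq_sum {N : ℕ} {α : ℝ} (hN : 0 < N) (hα : 0 ≤ α) (I0 : Finset (Fin N))
    (wh : Fin N → (Fin N → ℝ) → ℝ) (p : Fin N → ℝ) :
    FDP N α I0 (fun j => wh j p * p j) = ∑ i ∈ I0, hfun N α wh i p := by
  unfold FDP hfun
  rw [card_bhRejected hN hα, ← Finset.sum_div]
  congr 1
  have hset : (bhRejected N α (fun j => wh j p * p j)) ∩ I0
      = I0.filter (fun i => wh i p * p i ≤
          (bhNumRejections N α (fun j => wh j p * p j) : ℝ) * α / N) := by
    ext i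
    simp only [bhRejected, Finset.mem_inter, Finset.mem_filter, Finset.mem_univ, true_and]
    exact and_comm
  rw [hset, Finset.card_filter]
  push_cast
  rfl

lemma measurable_update_pair {N : ℕ} (i : Fin N) :
    Measurable (fun z : (Fin N → ℝ) × ℝ => Function.update z.1 i z.2) := by
  refine measurable_pi_lambda _ fun j => ?_
  rcases eq_or_ne j i with h | h
  · subst h
    simpa only [Function.update_self] using measurable_snd
  · simp only [Function.update_of_ne h]
    exact (measurable_pi_apply j).comp measurable_fst

lemma lemD {N : ℕ} (hN : 0 < N) (wh : Fin N → (Fin N → ℝ) → ℝ)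
    (hpos : ∀ i p, 0 < wh i p)
    (hmono : ∀ i, ∀ p q : Fin N → ℝ, (∀ j, p j ≤ q j) → wh i p ≤ wh i q)
    {α : ℝ} (hα0 : 0 < α)
    (i : Fin N) (v : Fin N → ℝ) (hv : ∀ j, 0 ≤ v j) (hvi : v i = 0) :
    ∫ t in Set.Icc (0:ℝ) 1, hfun N α wh i (Function.update v i t) ≤ α / (N * wh i v) := by
  set w := wh i v with hw
  have hwpos : 0 < w := hpos i v
  have hNpos : (0:ℝ) < N := by exact_mod_cast hN
  set c := α / (N * w) with hc
  have hcpos : 0 < c := by positivity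
  set r : ℝ → ℕ := fun t => bhNumRejections N α
    (fun j => wh j (Function.update v i t) * (Function.update v i t) j) with hr
  set f : ℝ → ℝ := fun t => hfun N α wh i (Function.update v i t) with hf
  have hf_val : ∀ t, f t =
      (if wh i (Function.update v i t) * t ≤ (r t : ℝ) * α / N then 1 else 0) /
        max (r t : ℝ) 1 := by
    intro t
    simp only [hf, hfun, Function.update_self, hr]
  have hupd_nonneg : ∀ t : ℝ, 0 ≤ t → ∀ j, 0 ≤ Function.update v i t j := by
    intro t ht j
    rcases eq_or_ne j i with h | h
    · subst h; simpa using ht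
    · simpa [Function.update_of_ne h] using hv j
  have hupd_le : ∀ {s t : ℝ}, s ≤ t → ∀ j, Function.update v i s j ≤ Function.update v i t j := by
    intro s t hst j
    rcases eq_or_ne j i with h | h
    · subst h; simpa using hst
    · simp [Function.update_of_ne h]
  have hr_anti : ∀ {s t : ℝ}, 0 ≤ s → s ≤ t → r t ≤ r s := by
    intro s t hs hst
    apply bh_antitone
    intro j
    have h1 : wh j (Function.update v i s) ≤ wh j (Function.update v i t) :=
      hmono j _ _ (hupd_le hst)
    have h2 : Function.update v i s j ≤ Function.update v i t j := hupd_le hst j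
    exact mul_le_mul h1 h2 (hupd_nonneg s hs j) (hpos j _).le
  set A := {t : ℝ | t ∈ Set.Icc (0:ℝ) 1 ∧
    wh i (Function.update v i t) * t ≤ (r t : ℝ) * α / N} with hA
  have h0A : (0:ℝ) ∈ A := by
    refine ⟨Set.mem_Icc.mpr ⟨le_refl 0, zero_le_one⟩, ?_⟩
    rw [mul_zero]
    positivity
  have hAbdd : BddAbove A := ⟨1, fun t ht => ht.1.2⟩
  set τ := sSup A with hτ
  have hτ0 : 0 ≤ τ := le_csSup hAbdd h0A
  have hτ1 : τ ≤ 1 := csSup_le ⟨0, h0A⟩ (fun t ht => ht.1.2)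
  have hkey : ∀ t ∈ A, t ≤ c * r t := by
    intro t ht
    have h1 : wh i v ≤ wh i (Function.update v i t) := by
      refine hmono i _ _ (fun j => ?_)
      rcases eq_or_ne j i with h | h
      · subst h; rw [hvi, Function.update_self]; exact ht.1.1
      · simp [Function.update_of_ne h]
    have h2 : w * t ≤ (r t : ℝ) * α / N :=
      le_trans (mul_le_mul_of_nonneg_right h1 ht.1.1) ht.2
    have h2' : w * t * N ≤ (r t : ℝ) * α := (le_div_iff₀ hNpos).mp h2
    rw [hc, div_mul_eq_mul_div, le_div_iff₀ (by positivity : (0:ℝ) < N * w)]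
    nlinarith [h2']
  have hτle : ∀ t ∈ A, τ ≤ c * r t := by
    intro t ht
    refine Real.sSup_le (fun s hs => ?_) (by positivity)
    rcases le_total s t with h | h
    · exact le_trans h (hkey t ht)
    · refine le_trans (hkey s hs) ?_
      have hrle : r s ≤ r t := hr_anti ht.1.1 h
      have hcast : (r s : ℝ) ≤ r t := by exact_mod_cast hrle
      exact mul_le_mul_of_nonneg_left hcast hcpos.le
  have hf_nonneg : ∀ t, 0 ≤ f t := fun t => hfun_nonneg N α wh i _
  have hf_eq0 : ∀ t ∈ Set.Icc (0:ℝ) 1, t ∉ A → f t = 0 := by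
    intro t ht htA
    rw [hf_val t, if_neg, zero_div]
    intro hcond
    exact htA ⟨ht, hcond⟩
  rcases eq_or_lt_of_le hτ0 with hτeq | hτpos
  · have hA0 : A ⊆ {(0:ℝ)} := by
      intro t ht
      have h1 : t ≤ τ := le_csSup hAbdd ht
      have h2 : 0 ≤ t := ht.1.1
      have h3 : t = 0 := le_antisymm (hτeq ▸ h1) h2
      simp [h3]
    have hae : ∀ᵐ t ∂(volume.restrict (Set.Icc (0:ℝ) 1)), f t = 0 := by
      have h1 : ∀ᵐ t ∂(volume.restrict (Set.Icc (0:ℝ) 1)), t ∈ Set.Icc (0:ℝ) 1 :=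
        ae_restrict_mem measurableSet_Icc
      have h2 : ∀ᵐ t ∂(volume.restrict (Set.Icc (0:ℝ) 1)), t ≠ (0:ℝ) := by
        rw [ae_iff]
        have hset : {t : ℝ | ¬ t ≠ 0} = {(0:ℝ)} := by ext t; simp
        rw [hset, Measure.restrict_apply (measurableSet_singleton 0)]
        exact measure_mono_null Set.inter_subset_left Real.volume_singleton
      filter_upwards [h1, h2] with t ht ht0
      exact hf_eq0 t ht (fun hmem => ht0 (hA0 hmem))
    calc ∫ t in Set.Icc (0:ℝ) 1, f t = ∫ t in Set.Icc (0:ℝ) 1, (0:ℝ) := integral_congr_ae hae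
      _ = 0 := integral_zero _ _
      _ ≤ α / (N * w) := by positivity
  · have hbound : ∀ t ∈ Set.Icc (0:ℝ) 1,
        f t ≤ Set.indicator (Set.Icc (0:ℝ) τ) (fun _ => c / τ) t := by
      intro t ht
      by_cases htA : t ∈ A
      · have h1 : t ∈ Set.Icc (0:ℝ) τ := ⟨ht.1, le_csSup hAbdd htA⟩
        rw [Set.indicator_of_mem h1, hf_val t, if_pos htA.2]
        have h2 : τ ≤ c * max (r t : ℝ) 1 :=
          le_trans (hτle t htA) (mul_le_mul_of_nonneg_left (le_max_left _ _) hcpos.le)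
        rw [div_le_div_iff₀ (by positivity) hτpos]
        linarith
      · rw [hf_eq0 t ht htA]
        exact Set.indicator_nonneg (fun _ _ => by positivity) t
    have hint : Integrable (Set.indicator (Set.Icc (0:ℝ) τ) (fun _ => c / τ))
        (volume.restrict (Set.Icc (0:ℝ) 1)) :=
      (integrable_const _).indicator measurableSet_Icc
    have hfg : (fun t => f t) ≤ᵐ[volume.restrict (Set.Icc (0:ℝ) 1)]
        Set.indicator (Set.Icc (0:ℝ) τ) (fun _ => c / τ) := by
      filter_upwards [ae_restrict_mem measurableSet_Icc] with t ht using hbound t ht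
    refine le_trans (integral_mono_of_nonneg (ae_of_all _ hf_nonneg) hint hfg) ?_
    rw [integral_indicator measurableSet_Icc, Measure.restrict_restrict measurableSet_Icc]
    have hss : Set.Icc (0:ℝ) τ ∩ Set.Icc 0 1 = Set.Icc 0 τ :=
      Set.inter_eq_self_of_subset_left (Set.Icc_subset_Icc le_rfl hτ1)
    rw [hss, setIntegral_const, measureReal_def, Real.volume_Icc, sub_zero, ENNReal.toReal_ofReal hτ0,
      smul_eq_mul]
    rw [mul_div_assoc', mul_comm, mul_div_assoc, div_self hτpos.ne', mul_one]

lemma key_i {Ω : Type*} [MeasurableSpace Ω] (μ : Measure Ω) [IsProbabilityMeasure μ]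
    {N : ℕ} (hN : 0 < N) (P : Ω → Fin N → ℝ) (hPmeas : Measurable P)
    (hPrange : ∀ ω i, P ω i ∈ Set.Icc (0 : ℝ) 1)
    (hIndep : iIndepFun (fun i ω => P ω i) μ)
    (wh : Fin N → (Fin N → ℝ) → ℝ) (hwh : ∀ i, Measurable (wh i))
    (hpos : ∀ i p, 0 < wh i p)
    (hmono : ∀ i, ∀ p q : Fin N → ℝ, (∀ j, p j ≤ q j) → wh i p ≤ wh i q)
    {α : ℝ} (hα0 : 0 < α) (i : Fin N)
    (hunif : ∀ x ∈ Set.Icc (0:ℝ) 1, μ {ω | P ω i ≤ x} = ENNReal.ofReal x) :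
    ∫ ω, hfun N α wh i (P ω) ∂μ ≤
      ∫ ω, (α / N) * (1 / wh i (Function.update (P ω) i 0)) ∂μ := by
  classical
  set X : Ω → ℝ := fun ω => P ω i with hX
  set Y : Ω → (Fin N → ℝ) := fun ω => Function.update (P ω) i 0 with hY
  have hXmeas : Measurable X := (measurable_pi_apply i).comp hPmeas
  have hupd : Measurable (fun z : (Fin N → ℝ) × ℝ => Function.update z.1 i z.2) :=
    measurable_update_pair i
  have hYmeas : Measurable Y := hupd.comp (hPmeas.prodMk measurable_const)
  have hindep : IndepFun Y X μ := by
    have hbase := hIndep.indepFun_finset ({i}ᶜ : Finset (Fin N)) {i} (by simp)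
      (fun j => (measurable_pi_apply j).comp hPmeas)
    let φ : ({ x // x ∈ ({i}ᶜ : Finset (Fin N)) } → ℝ) → (Fin N → ℝ) := fun g j =>
      if h : j = i then 0 else g ⟨j, by simp [h]⟩
    let ψ : ({ x // x ∈ ({i} : Finset (Fin N)) } → ℝ) → ℝ := fun g => g ⟨i, by simp⟩
    have hφ : Measurable φ := by
      refine measurable_pi_lambda _ fun j => ?_
      by_cases h : j = i
      · simp only [φ, h, dif_pos]; exact measurable_const
      · simp only [φ, dif_neg h]; exact measurable_pi_apply _
    have hψ : Measurable ψ := measurable_pi_apply _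
    have hcomp := hbase.comp hφ hψ
    have hYeq : (φ ∘ fun a (j : { x // x ∈ ({i}ᶜ : Finset (Fin N)) }) => P a j) = Y := by
      funext ω
      funext j
      by_cases h : j = i
      · simp [φ, h, hY, Function.update_self]
      · simp [φ, h, hY, Function.update_of_ne h]
    have hXeq : (ψ ∘ fun a (j : { x // x ∈ ({i} : Finset (Fin N)) }) => P a j) = X := by
      funext ω; simp [ψ, hX]
    rwa [hYeq, hXeq] at hcomp
  have hjoint : μ.map (fun ω => (Y ω, X ω)) = (μ.map Y).prod (μ.map X) :=
    (indepFun_iff_map_prod_eq_prod_map_map hYmeas.aemeasurable hXmeas.aemeasurable).mp hindep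
  have hlawX : μ.map X = volume.restrict (Set.Icc (0:ℝ) 1) := by
    haveI : IsProbabilityMeasure (μ.map X) := Measure.isProbabilityMeasure_map hXmeas.aemeasurable
    refine MeasureTheory.Measure.ext_of_Iic (μ.map X) _ (fun x => ?_)
    rw [Measure.map_apply hXmeas measurableSet_Iic, Measure.restrict_apply measurableSet_Iic]
    rcases lt_or_ge x 0 with hx | hx
    · have h1 : X ⁻¹' Set.Iic x = ∅ := by
        ext ω
        simp only [Set.mem_preimage, Set.mem_Iic, Set.mem_empty_iff_false, iff_false, not_le]
        exact lt_of_lt_of_le hx (hPrange ω i).1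
      have h2 : Set.Iic x ∩ Set.Icc (0:ℝ) 1 = ∅ := by
        ext t
        simp only [Set.mem_inter_iff, Set.mem_Iic, Set.mem_Icc, Set.mem_empty_iff_false,
          iff_false, not_and]
        intro h h0 _
        linarith
      rw [h1, h2]
      simp
    · rcases le_or_gt x 1 with hx1 | hx1
      · have h1 : X ⁻¹' Set.Iic x = {ω | P ω i ≤ x} := rfl
        have h2 : Set.Iic x ∩ Set.Icc (0:ℝ) 1 = Set.Icc 0 x := by
          ext t
          simp only [Set.mem_inter_iff, Set.mem_Iic, Set.mem_Icc]
          constructor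
          · rintro ⟨h, h0, _⟩; exact ⟨h0, h⟩
          · rintro ⟨h0, h⟩; exact ⟨h, h0, le_trans h hx1⟩
        rw [h1, h2, hunif x ⟨hx, hx1⟩, Real.volume_Icc, sub_zero]
      · have h1 : X ⁻¹' Set.Iic x = Set.univ := by
          ext ω
          simp only [Set.mem_preimage, Set.mem_Iic, Set.mem_univ, iff_true]
          exact le_trans (hPrange ω i).2 hx1.le
        have h2 : Set.Iic x ∩ Set.Icc (0:ℝ) 1 = Set.Icc 0 1 := by
          ext t
          simp only [Set.mem_inter_iff, Set.mem_Iic, Set.mem_Icc]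
          constructor
          · rintro ⟨_, h0⟩; exact h0
          · rintro ⟨h0, h⟩; exact ⟨le_trans h hx1.le, h0, h⟩
        rw [h1, h2, measure_univ, Real.volume_Icc]
        norm_num
  haveI hPY : IsProbabilityMeasure (μ.map Y) := Measure.isProbabilityMeasure_map hYmeas.aemeasurable
  haveI hPX : IsProbabilityMeasure (μ.map X) := Measure.isProbabilityMeasure_map hXmeas.aemeasurable
  haveI hPicc : IsProbabilityMeasure (volume.restrict (Set.Icc (0:ℝ) 1)) := hlawX ▸ hPX
  set H : (Fin N → ℝ) × ℝ → ℝ := fun z => hfun N α wh i (Function.update z.1 i z.2) with hH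
  have hHmeas : Measurable H := (hfun_measurable N α wh hwh i).comp hupd
  have hHnn : ∀ z, 0 ≤ H z := fun z => hfun_nonneg N α wh i _
  have hHbd : ∀ z : (Fin N → ℝ) × ℝ, ‖H z‖ ≤ 1 := fun z => by
    rw [Real.norm_eq_abs, abs_of_nonneg (hHnn z)]
    exact hfun_le_one N α wh i _
  have hHint : Integrable H ((μ.map Y).prod (μ.map X)) :=
    Integrable.mono' (integrable_const 1) hHmeas.aestronglyMeasurable (ae_of_all _ hHbd)
  set F : (Fin N → ℝ) → ℝ := fun v => ∫ t, H (v, t) ∂(volume.restrict (Set.Icc (0:ℝ) 1)) with hF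
  have hFmeas : StronglyMeasurable F := hHmeas.stronglyMeasurable.integral_prod_right'
  have step1 : ∫ ω, hfun N α wh i (P ω) ∂μ = ∫ ω, H (Y ω, X ω) ∂μ := by
    refine integral_congr_ae (ae_of_all _ fun ω => ?_)
    simp only [hH, hY, hX]
    rw [Function.update_idem, Function.update_eq_self]
  have step2 : ∫ ω, H (Y ω, X ω) ∂μ = ∫ z, H z ∂((μ.map Y).prod (μ.map X)) := by
    rw [← hjoint]
    exact (integral_map (hYmeas.prodMk hXmeas).aemeasurable hHmeas.aestronglyMeasurable).symm
  have step3 : ∫ z, H z ∂((μ.map Y).prod (μ.map X)) = ∫ v, F v ∂(μ.map Y) := by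
    rw [MeasureTheory.integral_prod H hHint]
    simp only [hF, hlawX]
  have step4 : ∫ v, F v ∂(μ.map Y) = ∫ ω, F (Y ω) ∂μ :=
    integral_map hYmeas.aemeasurable hFmeas.aestronglyMeasurable
  have hFle : ∀ ω, F (Y ω) ≤ (α / N) * (1 / wh i (Y ω)) := by
    intro ω
    have hnn : ∀ j, 0 ≤ Y ω j := by
      intro j
      rcases eq_or_ne j i with h | h
      · subst h; simp [hY]
      · simp only [hY, Function.update_of_ne h]
        exact (hPrange ω j).1
    have h0 : Y ω i = 0 := by simp [hY]
    have hD := lemD hN wh hpos hmono hα0 i (Y ω) hnn h0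
    have hFeq : F (Y ω) = ∫ t in Set.Icc (0:ℝ) 1, hfun N α wh i (Function.update (Y ω) i t) := rfl
    rw [hFeq]
    refine le_trans hD ?_
    rw [mul_one_div, div_div]
  have hFYint : Integrable (fun ω => F (Y ω)) μ := by
    refine Integrable.mono' (integrable_const 1)
      ((hFmeas.comp_measurable hYmeas).aestronglyMeasurable) (ae_of_all _ fun ω => ?_)
    have hb : ‖F (Y ω)‖ ≤ 1 * (volume.restrict (Set.Icc (0:ℝ) 1) Set.univ).toReal :=
      norm_integral_le_of_norm_le_const (ae_of_all _ fun t => hHbd _)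
    simpa [measure_univ] using hb
  have hGint : Integrable (fun ω => (α / N) * (1 / wh i (Y ω))) μ := by
    have hwY : Measurable fun ω => wh i (Y ω) := (hwh i).comp hYmeas
    refine Integrable.mono' (integrable_const ((α / N) * (1 / wh i (fun _ => (0:ℝ)))))
      ((measurable_const.mul (measurable_const.div hwY)).aestronglyMeasurable)
      (ae_of_all _ fun ω => ?_)
    have hw0 : wh i (fun _ => (0:ℝ)) ≤ wh i (Y ω) := by
      refine hmono i _ _ (fun j => ?_)
      rcases eq_or_ne j i with h | h
      · subst h; simp [hY]
      · simp only [hY, Function.update_of_ne h]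
        exact (hPrange ω j).1
    have h1 : 0 < wh i (fun _ => (0:ℝ)) := hpos i _
    have h2 : (0:ℝ) < wh i (Y ω) := hpos i _
    have hαN : (0:ℝ) ≤ α / N := by positivity
    rw [Real.norm_eq_abs, abs_of_nonneg (by positivity)]
    exact mul_le_mul_of_nonneg_left (one_div_le_one_div_of_le h1 hw0) hαN
  calc ∫ ω, hfun N α wh i (P ω) ∂μ = ∫ ω, F (Y ω) ∂μ := by rw [step1, step2, step3, step4]
    _ ≤ ∫ ω, (α / N) * (1 / wh i (Y ω)) ∂μ := integral_mono hFYint hGint hFle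

end AuxiliaryLemmas

/-- Result 3: FDR control of the data-adaptive weighted BH procedure, for independent
p-values with uniform nulls and coordinatewise nondecreasing weight functions satisfying
the key expectation bound. -/
theorem dataAdaptive_weightedBH_FDR_control
    {Ω : Type*} [MeasurableSpace Ω] (μ : Measure Ω) [IsProbabilityMeasure μ]
    {N : ℕ} (hN : 0 < N) (P : Ω → Fin N → ℝ) (hPmeas : Measurable P)
    (hPrange : ∀ ω i, P ω i ∈ Set.Icc (0 : ℝ) 1)
    (I0 : Finset (Fin N))
    (hUnif : UniformNulls μ P I0)
    (hIndep : iIndepFun (fun i ω => P ω i) μ)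
    (wh : Fin N → (Fin N → ℝ) → ℝ)
    (hmeas : ∀ i, Measurable (wh i))
    (hpos : ∀ i p, 0 < wh i p)
    (hmono : ∀ i, ∀ p q : Fin N → ℝ, (∀ j, p j ≤ q j) → wh i p ≤ wh i q)
    (hcond : ∫ ω, ∑ i ∈ I0, 1 / wh i (Function.update (P ω) i 0) ∂μ ≤ (N : ℝ))
    (α : ℝ) (hα : α ∈ Set.Ioo (0 : ℝ) 1) :
    FDR μ N α I0 (fun ω i => wh i (P ω) * P ω i) ≤ α := by
  obtain ⟨hα0, hα1⟩ := hα
  have hN' : (N:ℝ) ≠ 0 := Nat.cast_ne_zero.mpr hN.ne'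
  have hint_h : ∀ i : Fin N, Integrable (fun ω => hfun N α wh i (P ω)) μ := by
    intro i
    refine Integrable.mono' (integrable_const 1)
      (((hfun_measurable N α wh hmeas i).comp hPmeas).aestronglyMeasurable)
      (ae_of_all _ fun ω => ?_)
    rw [Real.norm_eq_abs, abs_of_nonneg (hfun_nonneg N α wh i _)]
    exact hfun_le_one N α wh i _
  have hint_g : ∀ i : Fin N,
      Integrable (fun ω => (α / N) * (1 / wh i (Function.update (P ω) i 0))) μ := by
    intro i
    have hYmeas : Measurable fun ω => Function.update (P ω) i 0 :=
      (measurable_update_pair i).comp (hPmeas.prodMk measurable_const)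
    have hwY : Measurable fun ω => wh i (Function.update (P ω) i 0) := (hmeas i).comp hYmeas
    refine Integrable.mono' (integrable_const ((α / N) * (1 / wh i (fun _ => (0:ℝ)))))
      ((measurable_const.mul (measurable_const.div hwY)).aestronglyMeasurable)
      (ae_of_all _ fun ω => ?_)
    have hw0 : wh i (fun _ => (0:ℝ)) ≤ wh i (Function.update (P ω) i 0) := by
      refine hmono i _ _ (fun j => ?_)
      rcases eq_or_ne j i with h | h
      · subst h; simp
      · simp only [Function.update_of_ne h]
        exact (hPrange ω j).1
    have h1 : 0 < wh i (fun _ => (0:ℝ)) := hpos i _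
    have h2 : (0:ℝ) < wh i (Function.update (P ω) i 0) := hpos i _
    have hαN : (0:ℝ) ≤ α / N := by positivity
    rw [Real.norm_eq_abs, abs_of_nonneg (by positivity)]
    exact mul_le_mul_of_nonneg_left (one_div_le_one_div_of_le h1 hw0) hαN
  have h1 : FDR μ N α I0 (fun ω i => wh i (P ω) * P ω i)
      = ∑ i ∈ I0, ∫ ω, hfun N α wh i (P ω) ∂μ := by
    unfold FDR
    have hptwise : ∀ ω, FDP N α I0 (fun i => wh i (P ω) * P ω i)
        = ∑ i ∈ I0, hfun N α wh i (P ω) :=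
      fun ω => FDP_eq_sum hN hα0.le I0 wh (P ω)
    show (∫ ω, FDP N α I0 (fun i => wh i (P ω) * P ω i) ∂μ) = _
    rw [integral_congr_ae (ae_of_all _ hptwise)]
    exact integral_finset_sum I0 (fun i _ => hint_h i)
  rw [h1]
  have h2 : ∀ i ∈ I0, ∫ ω, hfun N α wh i (P ω) ∂μ ≤
      ∫ ω, (α / N) * (1 / wh i (Function.update (P ω) i 0)) ∂μ := fun i hi =>
    key_i μ hN P hPmeas hPrange hIndep wh hmeas hpos hmono hα0 i (hUnif i hi)
  calc (∑ i ∈ I0, ∫ ω, hfun N α wh i (P ω) ∂μ)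
      ≤ ∑ i ∈ I0, ∫ ω, (α / N) * (1 / wh i (Function.update (P ω) i 0)) ∂μ :=
        Finset.sum_le_sum h2
    _ = ∫ ω, ∑ i ∈ I0, (α / N) * (1 / wh i (Function.update (P ω) i 0)) ∂μ :=
        (integral_finset_sum I0 (fun i _ => hint_g i)).symm
    _ = (α / N) * ∫ ω, ∑ i ∈ I0, 1 / wh i (Function.update (P ω) i 0) ∂μ := by
        simp_rw [← Finset.mul_sum]
        exact integral_const_mul _ _
    _ ≤ (α / N) * N := mul_le_mul_of_nonneg_left hcond (by positivity)
    _ = α := by field_simp
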